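/- Consider an LLM-ensembling application plan search instance arising from a bin packing instance: there are n models, model i has exactly one admissible execution plan requiring g_i GPUs (with 1 ≤ g_i ≤ N for every i), there are N GPUs in total, and every model takes the same positive time t to finish its inference workload regardless of when it is scheduled. A valid application execution plan is a finite sequence of execution stages that partitions the index set {1, …, n} into pairwise disjoint nonempty sets S_1, …, S_m whose union is {1, …, n}, such that for every stage j the total GPU requirement ∑_{i ∈ S_j} g_i is at most N; the duration of each stage equals t (all models in a stage finish simultaneously), so the total latency of the plan is m · t. Then the minimum total latency over all valid application execution plans equals t · k*, where k* is the minimum number of bins of capacity N needed to pack items of sizes g_1, …, g_n (i.e., the minimum m for which {1, …, n} can be partitioned into m sets each with total size at most N). -/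
import Mathlib


/-- The minimum total latency over all valid application execution plans (stages are
nonempty, pairwise disjoint, cover all models, and each stage fits in the `N` GPUs;
each stage lasts time `t`) equals `t * k*`, where `k*` is the bin-packing optimum:
the minimum number of capacity-`N` bins needed to pack items of sizes `g 1, …, g n`. -/
theorem min_latency_eq_binpacking_opt
    (n N : ℕ) (hN : 0 < N) (g : Fin n → ℕ)
    (hg_pos : ∀ i, 1 ≤ g i) (hg_le : ∀ i, g i ≤ N)
    (t : ℝ) (ht : 0 < t) :
    sInf { L : ℝ |
        ∃ (m : ℕ) (S : Fin m → Finset (Fin n)),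
          (∀ j, (S j).Nonempty) ∧
          (∀ j₁ j₂, j₁ ≠ j₂ → Disjoint (S j₁) (S j₂)) ∧
          (∀ i, ∃ j, i ∈ S j) ∧
          (∀ j, ∑ i ∈ S j, g i ≤ N) ∧
          L = (m : ℝ) * t } =
    t * (sInf { m : ℕ |
        ∃ S : Fin m → Finset (Fin n),
          (∀ j₁ j₂, j₁ ≠ j₂ → Disjoint (S j₁) (S j₂)) ∧
          (∀ i, ∃ j, i ∈ S j) ∧
          (∀ j, ∑ i ∈ S j, g i ≤ N) } : ℕ) := by
  set A : Set ℕ := { m : ℕ |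
        ∃ S : Fin m → Finset (Fin n),
          (∀ j₁ j₂, j₁ ≠ j₂ → Disjoint (S j₁) (S j₂)) ∧
          (∀ i, ∃ j, i ∈ S j) ∧
          (∀ j, ∑ i ∈ S j, g i ≤ N) } with hA_def
  have hAne : A.Nonempty := by
    refine ⟨n, fun j => {j}, ?_, fun i => ⟨i, Finset.mem_singleton_self i⟩, ?_⟩
    · intro j₁ j₂ h
      simp [Finset.disjoint_singleton]; omega
    · intro j; simpa using hg_le j
  have hmem := Nat.sInf_mem hAne
  have hle : ∀ a ∈ A, sInf A ≤ a := fun a ha => Nat.sInf_le ha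
  obtain ⟨k, hkmem, hkle, hkinf⟩ :
      ∃ k, k ∈ A ∧ (∀ a ∈ A, k ≤ a) ∧ k = sInf A := ⟨sInf A, hmem, hle, rfl⟩
  rw [← hkinf]
  obtain ⟨S, hdisj, hcov, hcap⟩ := hkmem
  have hne : ∀ j, (S j).Nonempty := by
    intro j
    rw [Finset.nonempty_iff_ne_empty]
    intro hemp
    have hpos : 0 < k := j.pos
    obtain ⟨k', rfl⟩ : ∃ k', k = k' + 1 := ⟨k - 1, by omega⟩
    have hk'A : k' ∈ A := by
      refine ⟨fun i => S (j.succAbove i), ?_, ?_, fun i => hcap _⟩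
      · intro j₁ j₂ h
        exact hdisj _ _ (fun e => h (Fin.succAbove_right_injective e))
      · intro i
        obtain ⟨j', hj'⟩ := hcov i
        have hjne : j' ≠ j := by
          rintro rfl; rw [hemp] at hj'; exact absurd hj' (Finset.notMem_empty i)
        obtain ⟨j'', rfl⟩ := Fin.exists_succAbove_eq hjne
        exact ⟨j'', hj'⟩
    have := hkle k' hk'A
    omega
  have : IsLeast { L : ℝ |
        ∃ (m : ℕ) (S : Fin m → Finset (Fin n)),
          (∀ j, (S j).Nonempty) ∧
          (∀ j₁ j₂, j₁ ≠ j₂ → Disjoint (S j₁) (S j₂)) ∧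
          (∀ i, ∃ j, i ∈ S j) ∧
          (∀ j, ∑ i ∈ S j, g i ≤ N) ∧
          L = (m : ℝ) * t } (t * k) := by
    constructor
    · exact ⟨k, S, hne, hdisj, hcov, hcap, (mul_comm _ _)⟩
    · rintro L ⟨m, S', hne', hdisj', hcov', hcap', rfl⟩
      have hmA : m ∈ A := ⟨S', hdisj', hcov', hcap'⟩
      have hkm : k ≤ m := hkle m hmA
      calc t * (k : ℝ) = (k : ℝ) * t := mul_comm _ _
        _ ≤ (m : ℝ) * t := by
            exact mul_le_mul_of_nonneg_right (by exact_mod_cast hkm) ht.le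
  exact this.csInf_eq
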